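/- arXiv:2005.10435 — 2 statements merged into one kernel-verified Lean document; each statement's English description precedes it below -/
import Mathlib

section
/- Let h_1 ≤ ... ≤ h_N be positive reals, r < N a positive integer, k and M defined as: (r−k+1)h_{N−k+1} ≥ ∑_{i=1}^{N−k+1} h_i, (r−k)h_{N−k} < ∑_{i=1}^{N−k} h_i, M = (∑_{i=1}^{N−k} h_i)/(r−k). Then with p_i = r(min(h_i,M))/(∑_j min(h_j,M)), the objective satisfies ∑_{i=1}^N h_i²/p_i = ∑_{i=N−k+1}^N h_i² + (r−k)M². -/
/-! The conditions on `k` place the cap `M` between the `N - k` smallest and the `k` largest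
weights. With `S = (r - k) M` the sum of the `N - k` smallest, `∑ j, min (h j) M = S + k M = r M`,
so `p i = min (h i) M / M` and `h i ^ 2 / p i = h i * max (h i) M`, which sums to
`S M + ∑_{i > N - k} h i ^ 2`. -/

open Finset

lemma sum_Icc_one_eq_add_sum_Icc (f : ℕ → ℝ) {m N : ℕ} (hmN : m ≤ N) :
    ∑ i ∈ Icc 1 N, f i = ∑ i ∈ Icc 1 m, f i + ∑ i ∈ Icc (m + 1) N, f i := by
  rw [Icc_add_one_left_eq_Ioc, ← zero_add 1, Icc_add_one_left_eq_Ioc, Icc_add_one_left_eq_Ioc]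
  exact (sum_Ioc_consecutive f m.zero_le hmN).symm

lemma sq_div_capped_eq_mul_max {x M r : ℝ} (hx : 0 < x) (hM : 0 < M) (hr : 0 < r) :
    x ^ 2 / (r * min x M / (r * M)) = x * max x M := by
  rcases le_total x M with hxM | hMx
  · rw [min_eq_left hxM, max_eq_right hxM]
    field_simp
  · rw [min_eq_right hMx, max_eq_left hMx]
    field_simp

lemma sum_min_of_threshold {f : ℕ → ℝ} {m N : ℕ} {M : ℝ} (hmN : m ≤ N)
    (hlow : ∀ i ∈ Icc 1 m, f i ≤ M) (hhigh : ∀ i ∈ Icc (m + 1) N, M ≤ f i) :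
    ∑ i ∈ Icc 1 N, min (f i) M = ∑ i ∈ Icc 1 m, f i + (N - m : ℕ) * M := by
  rw [sum_Icc_one_eq_add_sum_Icc _ hmN, sum_congr rfl fun i hi => min_eq_left (hlow i hi),
    sum_congr rfl fun i hi => min_eq_right (hhigh i hi), sum_const, Nat.card_Icc, nsmul_eq_mul]
  congr 3
  omega

lemma sum_mul_max_of_threshold {f : ℕ → ℝ} {m N : ℕ} {M : ℝ} (hmN : m ≤ N)
    (hlow : ∀ i ∈ Icc 1 m, f i ≤ M) (hhigh : ∀ i ∈ Icc (m + 1) N, M ≤ f i) :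
    ∑ i ∈ Icc 1 N, f i * max (f i) M = (∑ i ∈ Icc 1 m, f i) * M + ∑ i ∈ Icc (m + 1) N, f i ^ 2 := by
  rw [sum_Icc_one_eq_add_sum_Icc _ hmN, sum_mul]
  congr 1
  · exact sum_congr rfl fun i hi => by rw [max_eq_right (hlow i hi)]
  · exact sum_congr rfl fun i hi => by rw [max_eq_left (hhigh i hi), sq]

lemma lt_of_sum_Icc_le_mul {h : ℕ → ℝ} {N r k : ℕ} (hr : 0 < r) (hrN : r < N) (hk : k ≤ r)
    (hpos : ∀ i ∈ Icc 1 N, 0 < h i)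
    (hle : 1 ≤ k → ∑ i ∈ Icc 1 (N - k + 1), h i ≤ ((r : ℝ) - k + 1) * h (N - k + 1)) :
    k < r := by
  refine hk.lt_of_ne fun hkr => ?_
  subst hkr
  have hsum := hle hr
  rw [sum_Icc_succ_top (by omega), sub_self, zero_add, one_mul] at hsum
  have : 0 < ∑ i ∈ Icc 1 (N - k), h i :=
    sum_pos (fun i hi => hpos i (Icc_subset_Icc_right (by omega) hi)) (nonempty_Icc.2 (by omega))
  linarith

lemma le_div_of_mul_lt_sum_Icc {h : ℕ → ℝ} {m N : ℕ} {c : ℝ} (hc : 0 < c) (hmN : m ≤ N)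
    (hmono : ∀ i j, 1 ≤ i → i ≤ j → j ≤ N → h i ≤ h j)
    (hlt : c * h m < ∑ i ∈ Icc 1 m, h i) :
    ∀ i ∈ Icc 1 m, h i ≤ (∑ i ∈ Icc 1 m, h i) / c := by
  intro i hi
  rw [mem_Icc] at hi
  refine (hmono i m hi.1 hi.2 hmN).trans (le_of_lt ?_)
  rwa [lt_div_iff₀ hc, mul_comm]

lemma div_le_of_sum_Icc_succ_le {h : ℕ → ℝ} {m N : ℕ} {c : ℝ} (hc : 0 < c)
    (hmono : ∀ i j, 1 ≤ i → i ≤ j → j ≤ N → h i ≤ h j)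
    (hle : ∑ i ∈ Icc 1 (m + 1), h i ≤ (c + 1) * h (m + 1)) :
    ∀ i ∈ Icc (m + 1) N, (∑ i ∈ Icc 1 m, h i) / c ≤ h i := by
  intro i hi
  rw [mem_Icc] at hi
  rw [sum_Icc_succ_top (by omega)] at hle
  refine le_trans ?_ (hmono (m + 1) i (by omega) hi.1 hi.2)
  rw [div_le_iff₀ hc]
  linarith

/-- Value of the objective at the capped optimal subsampling probabilities:
`∑ h i ^ 2 / p i = ∑_{i=N-k+1}^N h i ^ 2 + (r - k) M ^ 2`. -/
theorem objective_value_at_capped_probabilities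
    (N r k : ℕ) (hr : 0 < r) (hrN : r < N) (hk : k ≤ r)
    (h : ℕ → ℝ) (hpos : ∀ i ∈ Finset.Icc 1 N, 0 < h i)
    (hmono : ∀ i j, 1 ≤ i → i ≤ j → j ≤ N → h i ≤ h j)
    (hcond1 : 1 ≤ k →
      (∑ i ∈ Finset.Icc 1 (N - k + 1), h i) ≤ ((r : ℝ) - k + 1) * h (N - k + 1))
    (hcond2 : ((r : ℝ) - k) * h (N - k) < ∑ i ∈ Finset.Icc 1 (N - k), h i)
    (M : ℝ) (hM : M = (∑ i ∈ Finset.Icc 1 (N - k), h i) / ((r : ℝ) - k))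
    (p : ℕ → ℝ)
    (hp : ∀ i, p i = (r : ℝ) * min (h i) M / (∑ j ∈ Finset.Icc 1 N, min (h j) M)) :
    (∑ i ∈ Finset.Icc 1 N, (h i) ^ 2 / p i) =
      (∑ i ∈ Finset.Icc (N - k + 1) N, (h i) ^ 2) + ((r : ℝ) - k) * M ^ 2 := by
  have hkr : k < r := lt_of_sum_Icc_le_mul hr hrN hk hpos hcond1
  have hrk : (0 : ℝ) < r - k := sub_pos.2 (by exact_mod_cast hkr)
  have hlow : ∀ i ∈ Icc 1 (N - k), h i ≤ M :=
    hM ▸ le_div_of_mul_lt_sum_Icc hrk (by omega) hmono hcond2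
  have hhigh : ∀ i ∈ Icc (N - k + 1) N, M ≤ h i := fun i hi =>
    hM ▸ div_le_of_sum_Icc_succ_le hrk hmono (hcond1 (by grind)) i hi
  have hMpos : 0 < M := (hpos 1 (by simp; omega)).trans_le (hlow 1 (by simp; omega))
  have hT : ∑ j ∈ Icc 1 N, min (h j) M = r * M := by
    rw [sum_min_of_threshold (by omega) hlow hhigh, Nat.sub_sub_self (by omega), hM]
    field_simp
    ring
  calc ∑ i ∈ Icc 1 N, h i ^ 2 / p i = ∑ i ∈ Icc 1 N, h i * max (h i) M :=
        sum_congr rfl fun i hi => by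
          rw [hp, hT, sq_div_capped_eq_mul_max (hpos i hi) hMpos (by positivity)]
    _ = _ := by
      rw [sum_mul_max_of_threshold (by omega) hlow hhigh, hM]
      field_simp
      ring
end

section
/- Let h_1 ≤ ... ≤ h_N be positive reals and r a positive integer. The map M ↦ (min(h_N, M))/(∑_{i=1}^N min(h_i, M)) is nondecreasing on the interval (h_1, h_N). -/
/-- The map `M ↦ min (h N) M / ∑_{i=1}^N min (h i) M` is nondecreasing on the open
interval `(h 1, h N)`, for positive nondecreasing weights `h 1 ≤ ⋯ ≤ h N`. -/
theorem threshold_ratio_monotone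
    (N r : ℕ) (hr : 0 < r) (hN : 0 < N)
    (h : ℕ → ℝ) (hpos : ∀ i ∈ Finset.Icc 1 N, 0 < h i)
    (hmono : ∀ i j, 1 ≤ i → i ≤ j → j ≤ N → h i ≤ h j) :
    ∀ M M' : ℝ, h 1 < M → M ≤ M' → M' < h N →
      min (h N) M / (∑ i ∈ Finset.Icc 1 N, min (h i) M) ≤
        min (h N) M' / (∑ i ∈ Finset.Icc 1 N, min (h i) M') := by
  intro M M' h1M hMM' hM'N
  have h1mem : (1 : ℕ) ∈ Finset.Icc 1 N := Finset.mem_Icc.mpr ⟨le_refl 1, hN⟩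
  have hM0 : 0 < M := lt_trans (hpos 1 h1mem) h1M
  have hM'0 : 0 < M' := lt_of_lt_of_le hM0 hMM'
  have hne : (Finset.Icc 1 N).Nonempty := ⟨1, h1mem⟩
  have hSpos : ∀ K : ℝ, 0 < K → 0 < ∑ i ∈ Finset.Icc 1 N, min (h i) K := by
    intro K hK
    exact Finset.sum_pos (fun i hi => lt_min (hpos i hi) hK) hne
  have e1 : min (h N) M = M := min_eq_right (le_of_lt (lt_of_le_of_lt hMM' hM'N))
  have e2 : min (h N) M' = M' := min_eq_right (le_of_lt hM'N)
  rw [e1, e2, div_le_div_iff₀ (hSpos M hM0) (hSpos M' hM'0), Finset.mul_sum,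
    Finset.mul_sum]
  apply Finset.sum_le_sum
  intro i hi
  by_cases hc : h i ≤ M
  · rw [min_eq_left hc, min_eq_left (le_trans hc hMM')]
    exact mul_le_mul_of_nonneg_right hMM' (le_of_lt (hpos i hi))
  · rw [min_eq_right (le_of_lt (lt_of_not_ge hc))]
    calc M * min (h i) M' ≤ M * M' :=
          mul_le_mul_of_nonneg_left (min_le_right _ _) (le_of_lt hM0)
      _ = M' * M := mul_comm _ _
end
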